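/- Let n, s be nonnegative integers with s ≤ n. Then, as an identity of polynomials in q, ∑_{w ∈ C_{n,s}} q^{maj(w⁻¹)} = [n]_q · [n−1]_q ⋯ [n−s+1]_q (the product having s factors, and being the empty product 1 when s = 0). -/

import Mathlib

open Polynomial

/-- `w` has an increasing subsequence of length `m`. -/
def HasIncSubseq {n : ℕ} (w : Equiv.Perm (Fin n)) (m : ℕ) : Prop :=
  ∃ f : Fin m → Fin n, StrictMono f ∧ StrictMono fun j => w (f j)

/-- The length of the longest increasing subsequence of `w`. -/
noncomputable def isLen {n : ℕ} (w : Equiv.Perm (Fin n)) : ℕ :=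
  sSup {m | HasIncSubseq w m}

/-- The first `n - s` values of `w` are increasing (positions `0,…,n-s-1` in 0-indexing,
i.e. `w(1) < ⋯ < w(n-s)` in 1-indexing). -/
def PrefixInc (n s : ℕ) (w : Equiv.Perm (Fin n)) : Prop :=
  ∀ i j : Fin n, (i : ℕ) < j → (j : ℕ) < n - s → w i < w j

/-- Major index of a permutation: the sum of the (1-indexed) descent positions.
Position `i ∈ {0,…,n-2}` (0-indexed) contributes `i + 1`. -/
def maj {n : ℕ} (σ : Equiv.Perm (Fin n)) : ℕ :=
  ∑ i ∈ Finset.range n,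
    if h : i + 1 < n then
      if σ ⟨i + 1, h⟩ < σ ⟨i, Nat.lt_of_succ_lt h⟩ then i + 1 else 0
    else 0

/-- The q-integer `[m]_q = 1 + q + ⋯ + q^{m-1}` as a polynomial in `q = X` over `ℤ`. -/
noncomputable def qInt (m : ℕ) : Polynomial ℤ :=
  ∑ i ∈ Finset.range m, (X : Polynomial ℤ) ^ i

/-- The set `Π_{n,k}` of permutations whose first `n - k` values are increasing and whose
longest increasing subsequence has length exactly `n - k`, as a `Finset`. -/
noncomputable def PiFinset (n k : ℕ) : Finset (Equiv.Perm (Fin n)) :=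
  @Finset.filter _ (fun w => PrefixInc n k w ∧ isLen w = n - k) (Classical.decPred _)
    Finset.univ

/-- The set `C_{n,s}` of permutations whose first `n - s` values are increasing,
as a `Finset`. -/
noncomputable def CFinset (n s : ℕ) : Finset (Equiv.Perm (Fin n)) :=
  @Finset.filter _ (fun w => PrefixInc n s w) (Classical.decPred _) Finset.univ

/-- The prefix `w(1),…,w(a)` (1-indexed) contains an increasing subsequence of length `m`. -/
def HasIncSubseqPrefix {n : ℕ} (w : Equiv.Perm (Fin n)) (a m : ℕ) : Prop :=
  ∃ f : Fin m → Fin n, StrictMono f ∧ (∀ j, (f j : ℕ) < a) ∧ StrictMono fun j => w (f j)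

/-- Membership in `C_{n,s,a}`: `π ∈ C_{n,s}`, the prefix of length `a` contains an increasing
subsequence of length `n - s + 1`, but the prefix of length `a - 1` does not. -/
def MemCa (n s a : ℕ) (π : Equiv.Perm (Fin n)) : Prop :=
  PrefixInc n s π ∧ HasIncSubseqPrefix π a (n - s + 1) ∧
    ¬ HasIncSubseqPrefix π (a - 1) (n - s + 1)

/-- The set `C_{n,s,a}` as a `Finset`. -/
noncomputable def CaFinset (n s a : ℕ) : Finset (Equiv.Perm (Fin n)) :=
  @Finset.filter _ (fun π => MemCa n s a π) (Classical.decPred _) Finset.univ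

/-!
Put `u = w⁻¹`: the condition on `w` says that the values `0, …, n - s - 1` occur in
increasing order in `u`. Each such permutation of `n + 1` letters arises exactly once by
inserting the new maximum `n` into such a permutation of `n` letters at one of the `n + 1`
slots (MacMahon). If `u` has `d` descents, inserting at the end adds `0` to `maj`, inserting
at the descent slots (right to left) adds `1, …, d`, and inserting at the remaining slots
(left to right) adds `d + 1, …, n`. So each insertion step multiplies the generating function
by `[n + 1]_q`, and the claim follows by induction on `s` from `C_{n,0} = {id}`.
-/

open Finset Polynomial

section Descents

variable {n : ℕ}

def IsDescent (u : Equiv.Perm (Fin n)) (i : ℕ) : Prop :=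
  ∃ h : i + 1 < n, u ⟨i + 1, h⟩ < u ⟨i, Nat.lt_of_succ_lt h⟩

instance (u : Equiv.Perm (Fin n)) : DecidablePred (IsDescent u) :=
  fun _ => inferInstanceAs (Decidable (∃ _ : _, _))

theorem IsDescent.succ_lt {u : Equiv.Perm (Fin n)} {i : ℕ} (h : IsDescent u i) : i + 1 < n := h.1

theorem maj_eq_sum (u : Equiv.Perm (Fin n)) :
    maj u = ∑ i ∈ range n, if IsDescent u i then i + 1 else 0 := by
  refine sum_congr rfl fun i _ => ?_
  by_cases h : i + 1 < n <;> simp [IsDescent, h]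

theorem maj_one : maj (1 : Equiv.Perm (Fin n)) = 0 := by
  simp [maj_eq_sum, IsDescent, Fin.lt_def]

def descCount (u : Equiv.Perm (Fin n)) (a b : ℕ) : ℕ := #{i ∈ Ico a b | IsDescent u i}

variable (u : Equiv.Perm (Fin n))

theorem descCount_add {a b c : ℕ} (hab : a ≤ b) (hbc : b ≤ c) :
    descCount u a b + descCount u b c = descCount u a c := by
  simp only [descCount, card_filter, sum_Ico_consecutive _ hab hbc]

theorem descCount_le (a b : ℕ) : descCount u a b ≤ b - a :=
  (card_filter_le _ _).trans (Nat.card_Ico a b).le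

theorem descCount_add_ite {a b : ℕ} (hab : a < b) :
    descCount u a (b - 1) + (if IsDescent u (b - 1) then 1 else 0) = descCount u a b := by
  obtain ⟨c, rfl⟩ : ∃ c, b = c + 1 := ⟨b - 1, by omega⟩
  rw [← descCount_add u (by omega : a ≤ c) c.le_succ]
  simp [descCount, Nat.Ico_succ_singleton, filter_singleton, apply_ite]

theorem descCount_self (a : ℕ) : descCount u a a = 0 := by simp [descCount]

end Descents

section InsertMax

variable {n : ℕ} (u : Equiv.Perm (Fin n)) (p : Fin (n + 1))

def insertMax : Equiv.Perm (Fin (n + 1)) :=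
  (finSuccEquiv' p).trans ((Equiv.optionCongr u).trans finSuccEquivLast.symm)

@[simp]
theorem insertMax_self : insertMax u p p = Fin.last n := by
  simp [insertMax]

@[simp]
theorem insertMax_succAbove (k : Fin n) : insertMax u p (p.succAbove k) = (u k).castSucc := by
  simp [insertMax, finSuccEquivLast_symm_some]

theorem insertMax_symm_castSucc (a : Fin n) :
    (insertMax u p).symm a.castSucc = p.succAbove (u.symm a) := by
  rw [Equiv.symm_apply_eq, insertMax_succAbove, Equiv.apply_symm_apply]

theorem insertMax_injective :
    Function.Injective fun x : Equiv.Perm (Fin n) × Fin (n + 1) => insertMax x.1 x.2 := by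
  rintro ⟨u, p⟩ ⟨u', p'⟩ h
  simp only at h
  obtain rfl : p = p' :=
    (insertMax u p).injective (by rw [insertMax_self, h, insertMax_self])
  have hu : ∀ k, u k = u' k := fun k =>
    Fin.castSucc_injective n (by rw [← insertMax_succAbove, h, insertMax_succAbove])
  rw [Equiv.ext hu]

noncomputable def insertMaxEquiv (n : ℕ) :
    Equiv.Perm (Fin n) × Fin (n + 1) ≃ Equiv.Perm (Fin (n + 1)) :=
  Equiv.ofBijective _ <| (Fintype.bijective_iff_injective_and_card _).2
    ⟨insertMax_injective, by simp [Fintype.card_perm, Nat.factorial_succ, mul_comm]⟩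

theorem insertMax_apply_of_lt {i : ℕ} (hi : i < p) :
    insertMax u p ⟨i, by omega⟩ = (u ⟨i, by omega⟩).castSucc := by
  rw [← insertMax_succAbove, Fin.succAbove_of_castSucc_lt _ _ (by simpa [Fin.lt_def] using hi)]
  rfl

theorem insertMax_apply_succ_of_le {i : ℕ} (hi : p ≤ i) (hin : i < n) :
    insertMax u p ⟨i + 1, by omega⟩ = (u ⟨i, hin⟩).castSucc := by
  rw [← insertMax_succAbove, Fin.succAbove_of_le_castSucc _ _ (by simpa [Fin.le_def] using hi)]
  rfl

theorem isDescent_insertMax_of_lt {i : ℕ} (hi : i + 1 < p) :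
    IsDescent (insertMax u p) i ↔ IsDescent u i := by
  have hin : i + 1 < n := by omega
  simp only [IsDescent, hin, show i + 1 < n + 1 by omega, exists_true_left,
    insertMax_apply_of_lt u p hi, insertMax_apply_of_lt u p (i := i) (by omega),
    Fin.castSucc_lt_castSucc_iff]

theorem not_isDescent_insertMax {i : ℕ} (hi : i + 1 = p) : ¬ IsDescent (insertMax u p) i := by
  rintro ⟨h, hlt⟩
  rw [show (⟨i + 1, h⟩ : Fin (n + 1)) = p from Fin.ext hi, insertMax_self] at hlt
  exact (Fin.le_last _).not_gt hlt

theorem isDescent_insertMax_self : IsDescent (insertMax u p) p ↔ (p : ℕ) < n := by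
  refine ⟨fun h => by simpa using h.1, fun hp => ⟨by omega, ?_⟩⟩
  rw [insertMax_apply_succ_of_le u p le_rfl hp, show (⟨p, _⟩ : Fin (n + 1)) = p from rfl,
    insertMax_self]
  exact Fin.castSucc_lt_last _

theorem isDescent_insertMax_succ {i : ℕ} (hi : p ≤ i) :
    IsDescent (insertMax u p) (i + 1) ↔ IsDescent u i := by
  constructor
  · rintro ⟨h, hlt⟩
    refine ⟨by omega, ?_⟩
    rwa [insertMax_apply_succ_of_le u p (by omega) (by omega),
      insertMax_apply_succ_of_le u p hi (by omega), Fin.castSucc_lt_castSucc_iff] at hlt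
  · rintro ⟨h, hlt⟩
    refine ⟨by omega, ?_⟩
    rwa [insertMax_apply_succ_of_le u p (by omega) h,
      insertMax_apply_succ_of_le u p hi (by omega), Fin.castSucc_lt_castSucc_iff]

end InsertMax

section MajInsertMax

variable {n : ℕ} (u : Equiv.Perm (Fin n))

theorem ite_isDescent_insertMax_succAbove (p : Fin (n + 1)) (k : Fin n) :
    (if IsDescent (insertMax u p) (p.succAbove k) then (p.succAbove k : ℕ) + 1 else 0) +
        (if (k : ℕ) + 1 = p ∧ IsDescent u k then (k : ℕ) + 1 else 0) =
      (if IsDescent u k then (k : ℕ) + 1 else 0) +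
        (if p ≤ (k : ℕ) ∧ IsDescent u k then 1 else 0) := by
  rcases lt_or_ge (k : ℕ) p with hk | hk
  · rw [Fin.succAbove_of_castSucc_lt _ _ (by simpa [Fin.lt_def] using hk), Fin.val_castSucc]
    rcases (show (k : ℕ) + 1 ≤ p from hk).lt_or_eq with hk' | hk'
    · simp [isDescent_insertMax_of_lt u p hk', hk'.ne, hk.not_ge]
    · simp [not_isDescent_insertMax u p hk', hk', hk.not_ge]
  · rw [Fin.succAbove_of_le_castSucc _ _ (by simpa [Fin.le_def] using hk), Fin.val_succ]
    simp only [isDescent_insertMax_succ u p hk]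
    by_cases hD : IsDescent u k <;> simp [hD, hk]
    omega

/-- Inserting `n` at `p` destroys the descent at `p - 1`, creates one at `p` (unless `p = n`),
and moves every descent at or after `p` one step to the right. -/
theorem maj_insertMax_add (p : Fin (n + 1)) :
    maj (insertMax u p) + (if 0 < (p : ℕ) ∧ IsDescent u (p - 1) then (p : ℕ) else 0) =
      maj u + descCount u p n + (if (p : ℕ) < n then (p : ℕ) + 1 else 0) := by
  have hterms := sum_congr rfl fun k (_ : k ∈ univ) => ite_isDescent_insertMax_succAbove u p k
  rw [sum_add_distrib, sum_add_distrib] at hterms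
  have hlost : ∑ k : Fin n, (if (k : ℕ) + 1 = p ∧ IsDescent u k then (k : ℕ) + 1 else 0) =
      if 0 < (p : ℕ) ∧ IsDescent u (p - 1) then (p : ℕ) else 0 := by
    rw [Fin.sum_univ_eq_sum_range (fun k => if k + 1 = p ∧ IsDescent u k then k + 1 else 0)]
    rcases Nat.eq_zero_or_pos (p : ℕ) with hp | hp
    · simp [hp]
    rw [sum_eq_single ((p : ℕ) - 1) (fun k _ hk => if_neg fun h => hk (by omega))
      (fun h => if_neg fun hD => h (mem_range.2 (by have := hD.2.succ_lt; omega)))]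
    simp [hp, Nat.sub_add_cancel hp]
  have hshifted :
      ∑ k : Fin n, (if (p : ℕ) ≤ k ∧ IsDescent u k then 1 else 0) = descCount u p n := by
    rw [Fin.sum_univ_eq_sum_range (fun k => if (p : ℕ) ≤ k ∧ IsDescent u k then 1 else 0),
      ← card_filter, descCount]
    congr 1
    ext k
    simp only [mem_filter, mem_range, mem_Ico]
    tauto
  rw [maj_eq_sum, maj_eq_sum, sum_range, sum_range, Fin.sum_univ_succAbove _ p, ← hlost,
    ← hshifted]
  simp only [isDescent_insertMax_self]
  omega

def majIncrement (p : ℕ) : ℕ :=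
  if p = n then 0
  else if 0 < p ∧ IsDescent u (p - 1) then descCount u p n + 1
  else descCount u p n + p + 1

theorem maj_insertMax (p : Fin (n + 1)) : maj (insertMax u p) = maj u + majIncrement u p := by
  have h := maj_insertMax_add u p
  unfold majIncrement
  rcases p.is_le.lt_or_eq with hp | hp
  · rw [if_pos hp] at h
    rw [if_neg hp.ne]
    by_cases hD : 0 < (p : ℕ) ∧ IsDescent u (p - 1)
    · rw [if_pos hD] at h ⊢
      omega
    · rw [if_neg hD] at h ⊢
      omega
  · have hD : ¬ (0 < (p : ℕ) ∧ IsDescent u (p - 1)) := fun hD => by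
      have := hD.2.succ_lt
      omega
    rw [if_neg hD, hp, descCount_self, if_neg (lt_irrefl n)] at h
    rw [if_pos hp]
    omega

end MajInsertMax

section MajIncrement

variable {n : ℕ} (u : Equiv.Perm (Fin n))

theorem descCount_lt {a : ℕ} (ha : a < n) : descCount u a n < n - a := by
  have hlast := descCount_add_ite u ha
  have hD : ¬ IsDescent u (n - 1) := fun hD => by
    have := hD.succ_lt
    omega
  rw [if_neg hD] at hlast
  have := descCount_le u a (n - 1)
  omega

theorem majIncrement_le {p : ℕ} (hp : p ≤ n) : majIncrement u p ≤ n := by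
  unfold majIncrement
  split_ifs with hpn hD
  · omega
  · have := descCount_le u p n
    omega
  · have := descCount_lt u (lt_of_le_of_ne hp hpn)
    omega

theorem majIncrement_ne_of_lt {p q : ℕ} (hpq : p < q) (hq : q ≤ n) :
    majIncrement u p ≠ majIncrement u q := by
  have hsplit := descCount_add u hpq.le hq
  have hlast := descCount_add_ite u hpq
  have hle := descCount_le u p (q - 1)
  unfold majIncrement
  rw [if_neg (hpq.trans_le hq).ne]
  by_cases hqn : q = n
  · rw [if_pos hqn]
    split_ifs <;> omega
  rw [if_neg hqn]
  by_cases hDq : IsDescent u (q - 1)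
  · rw [if_pos hDq] at hlast
    rw [if_pos (show 0 < q ∧ IsDescent u (q - 1) from ⟨by omega, hDq⟩)]
    split_ifs <;> omega
  · rw [if_neg hDq] at hlast
    rw [if_neg (show ¬(0 < q ∧ IsDescent u (q - 1)) from fun h => hDq h.2)]
    split_ifs with hDp
    · have := hDp.1
      omega
    · omega

theorem majIncrement_injOn : Set.InjOn (majIncrement u) (range (n + 1)) := by
  intro p hp q hq h
  simp only [coe_range, Set.mem_Iio] at hp hq
  rcases lt_trichotomy p q with hpq | rfl | hqp
  · exact absurd h (majIncrement_ne_of_lt u hpq (by omega))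
  · rfl
  · exact absurd h.symm (majIncrement_ne_of_lt u hqp (by omega))

theorem image_majIncrement : (range (n + 1)).image (majIncrement u) = range (n + 1) :=
  eq_of_subset_of_card_le
    (image_subset_iff.2 fun _ hp => mem_range.2 (Nat.lt_succ_of_le
      (majIncrement_le u (Nat.le_of_lt_succ (mem_range.1 hp)))))
    (card_image_of_injOn (majIncrement_injOn u)).ge

theorem sum_comp_majIncrement {M : Type*} [AddCommMonoid M] (f : ℕ → M) :
    ∑ p : Fin (n + 1), f (majIncrement u p) = ∑ p ∈ range (n + 1), f p := by
  rw [Fin.sum_univ_eq_sum_range (fun p => f (majIncrement u p)),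
    ← sum_image (majIncrement_injOn u), image_majIncrement]

end MajIncrement

theorem prefixInc_inv_insertMax_iff {n s : ℕ} (u : Equiv.Perm (Fin n)) (p : Fin (n + 1)) :
    PrefixInc (n + 1) (s + 1) (insertMax u p)⁻¹ ↔ PrefixInc n s u⁻¹ := by
  simp only [PrefixInc, Nat.add_sub_add_right, Equiv.Perm.inv_def]
  constructor
  · intro h i j hij hj
    have := h i.castSucc j.castSucc hij hj
    rwa [insertMax_symm_castSucc, insertMax_symm_castSucc, Fin.succAbove_lt_succAbove_iff] at this
  · intro h i j hij hj
    obtain ⟨i, rfl⟩ := Fin.exists_castSucc_eq.2 (Fin.ne_last_of_lt (show i < Fin.last n by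
      simp [Fin.lt_def]; omega))
    obtain ⟨j, rfl⟩ := Fin.exists_castSucc_eq.2 (Fin.ne_last_of_lt (show j < Fin.last n by
      simp [Fin.lt_def]; omega))
    rw [insertMax_symm_castSucc, insertMax_symm_castSucc, Fin.succAbove_lt_succAbove_iff]
    exact h i j hij hj

theorem CFinset_zero (n : ℕ) : CFinset n 0 = {1} := by
  ext w
  simp only [CFinset, PrefixInc, Fin.val_fin_lt, tsub_zero, Fin.is_lt, forall_const, mem_filter,
    mem_univ, true_and, mem_singleton]
  refine ⟨fun h => Equiv.ext fun i => StrictMono.apply_eq (f := w) fun i j hij => h i j hij, ?_⟩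
  rintro rfl i j hij
  exact hij

theorem sum_CFinset_succ (n s : ℕ) :
    ∑ w ∈ CFinset (n + 1) (s + 1), (X : ℤ[X]) ^ maj w⁻¹ =
      qInt (n + 1) * ∑ w ∈ CFinset n s, (X : ℤ[X]) ^ maj w⁻¹ := by
  let e : Equiv.Perm (Fin n) × Fin (n + 1) ≃ Equiv.Perm (Fin (n + 1)) :=
    ((Equiv.inv _).prodCongr (Equiv.refl _)).trans ((insertMaxEquiv n).trans (Equiv.inv _))
  have hmem : ∀ x, x ∈ CFinset n s ×ˢ univ ↔ e x ∈ CFinset (n + 1) (s + 1) := fun x => by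
    simp [e, CFinset, insertMaxEquiv, prefixInc_inv_insertMax_iff]
  rw [← sum_equiv e hmem (f := fun x => X ^ maj x.1⁻¹ * X ^ majIncrement x.1⁻¹ x.2)
    fun x _ => by simp [e, insertMaxEquiv, maj_insertMax, pow_add]]
  simp only [sum_product, ← mul_sum, sum_comp_majIncrement _ (fun p => (X : ℤ[X]) ^ p)]
  rw [← sum_mul, mul_comm, qInt]

/-- For `s ≤ n`, the sum over `C_{n,s}` of `q^{maj(w⁻¹)}` equals
`[n]_q [n-1]_q ⋯ [n-s+1]_q`. -/
theorem c_maj_q (n s : ℕ) (h : s ≤ n) :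
    ∑ w ∈ CFinset n s, (X : Polynomial ℤ) ^ maj w⁻¹ =
      ∏ j ∈ Finset.range s, qInt (n - j) := by
  induction s generalizing n with
  | zero => simp [CFinset_zero, maj_one]
  | succ s ih =>
    obtain ⟨m, rfl⟩ : ∃ m, n = m + 1 := ⟨n - 1, by omega⟩
    rw [sum_CFinset_succ, ih m (by omega), prod_range_succ', mul_comm]
    simp
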